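/- Schur-complement step for Proposition 1: With α0 ∈ (0, 1), φ1 ∈ ℝ satisfying α0 φ1 > 1, φ2 ∈ ℝ², and V_c any real 5×5 matrix, write the 7×7 matrix Ω = F2ᵀ V_c F2 + F1ᵀ Ṽ_m F1 (with Ṽ_m, F1, F2 as below) in 2+5 block form Ω = [[A, B], [Bᵀ, D]], where A is its upper-left 2×2 block, B its upper-right 2×5 block, and D its lower-right 5×5 block. Then A is invertible and the Schur complement D − Bᵀ A^{−1} B equals V_c. Here Ṽ_m = [[A, B₀], [B₀ᵀ, C]] with A = [[α0/(1−α0), 1/(1−α0)], [1/(1−α0), (1−φ1)/((1−α0)(1−α0φ1))]], B₀ the 2×2 matrix with zero first row and second row φ2ᵀ/(1−α0φ1), C = −α0 φ2 φ2ᵀ/(1−α0φ1), F1 = (I_4, 0_{4×3}), F2 = (0_{5×2}, I_5). -/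

import Mathlib

/-!
In the `2 + 5` splitting, `Ω` has blocks `A` (the upper-left block of `Ṽ_m`), `B = u bᵀ` and
`D = V_c - (α0 / (1 - α0 φ1)) b bᵀ`, where `u = (0, 1 / (1 - α0 φ1))` and `b = (φ2, 0, 0, 0)`:
the blocks `B₀` and `C` of `Ṽ_m` are both rank one in the same vector `b`. Hence
`Bᵀ A⁻¹ B = (uᵀ A⁻¹ u) b bᵀ`, and since `(A⁻¹)₂₂ = -α0 (1 - α0 φ1)` the scalar `uᵀ A⁻¹ u` is exactly
`-α0 / (1 - α0 φ1)`, so the correction in `D` cancels and the Schur complement is `V_c`.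
-/

open Matrix

/-- The matrix `Ṽ_m` of the full-likelihood information. -/
noncomputable def tildeVm (α0 φ1 : ℝ) (φ2 : Fin 2 → ℝ) : Matrix (Fin 4) (Fin 4) ℝ :=
  !![α0 / (1 - α0), 1 / (1 - α0), 0, 0;
     1 / (1 - α0), (1 - φ1) / ((1 - α0) * (1 - α0 * φ1)),
       φ2 0 / (1 - α0 * φ1), φ2 1 / (1 - α0 * φ1);
     0, φ2 0 / (1 - α0 * φ1),
       -(α0 * (φ2 0 * φ2 0)) / (1 - α0 * φ1), -(α0 * (φ2 0 * φ2 1)) / (1 - α0 * φ1);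
     0, φ2 1 / (1 - α0 * φ1),
       -(α0 * (φ2 1 * φ2 0)) / (1 - α0 * φ1), -(α0 * (φ2 1 * φ2 1)) / (1 - α0 * φ1)]

/-- `F1 = (I_4, 0_{4×3})`. -/
def matF1 : Matrix (Fin 4) (Fin 7) ℝ :=
  Matrix.of fun i j => if (j : ℕ) = (i : ℕ) then 1 else 0

/-- `F2 = (0_{5×2}, I_5)`. -/
def matF2 : Matrix (Fin 5) (Fin 7) ℝ :=
  Matrix.of fun i j => if (j : ℕ) = (i : ℕ) + 2 then 1 else 0

/-- The full-likelihood information matrix `Ω = F2ᵀ V_c F2 + F1ᵀ Ṽ_m F1`. -/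
noncomputable def fullInfo (α0 φ1 : ℝ) (φ2 : Fin 2 → ℝ) (Vc : Matrix (Fin 5) (Fin 5) ℝ) :
    Matrix (Fin 7) (Fin 7) ℝ :=
  matF2ᵀ * Vc * matF2 + matF1ᵀ * tildeVm α0 φ1 φ2 * matF1

theorem Matrix.transpose_vecMulVec_mul_mul_vecMulVec {l n α : Type*} [Fintype l] [CommSemiring α]
    (u : l → α) (b : n → α) (M : Matrix l l α) :
    (vecMulVec u b)ᵀ * M * vecMulVec u b = (u ⬝ᵥ M *ᵥ u) • vecMulVec b b := by
  rw [transpose_vecMulVec, vecMulVec_mul, vecMulVec_mul_vecMulVec, vecMulVec_smul,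
    ← dotProduct_mulVec]

theorem Matrix.inv_fin_two_apply_one_one {K : Type*} [Field K] (A : Matrix (Fin 2) (Fin 2) K) :
    A⁻¹ 1 1 = A 0 0 / A.det := by
  rw [inv_def, Ring.inverse_eq_inv', adjugate_fin_two]
  simp [div_eq_inv_mul]

noncomputable def tildeVmA (α0 φ1 : ℝ) : Matrix (Fin 2) (Fin 2) ℝ :=
  !![α0 / (1 - α0), 1 / (1 - α0); 1 / (1 - α0), (1 - φ1) / ((1 - α0) * (1 - α0 * φ1))]

section TildeVmA
variable {α0 φ1 : ℝ}

theorem det_tildeVmA (h₁ : 1 - α0 ≠ 0) (h₂ : 1 - α0 * φ1 ≠ 0) :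
    (tildeVmA α0 φ1).det = -1 / ((1 - α0) * (1 - α0 * φ1)) := by
  rw [tildeVmA, det_fin_two_of]
  field_simp
  ring

theorem isUnit_det_tildeVmA (h₁ : 1 - α0 ≠ 0) (h₂ : 1 - α0 * φ1 ≠ 0) :
    IsUnit (tildeVmA α0 φ1).det := by
  rw [det_tildeVmA h₁ h₂, isUnit_iff_ne_zero]
  simp [h₁, h₂]

theorem tildeVmA_inv_one_one (h₁ : 1 - α0 ≠ 0) (h₂ : 1 - α0 * φ1 ≠ 0) :
    (tildeVmA α0 φ1)⁻¹ 1 1 = -(α0 * (1 - α0 * φ1)) := by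
  rw [inv_fin_two_apply_one_one, det_tildeVmA h₁ h₂]
  simp only [tildeVmA, of_apply, cons_val', cons_val_zero, cons_val_fin_one]
  field_simp

end TildeVmA

section Blocks
variable (α0 φ1 : ℝ) (φ2 : Fin 2 → ℝ) (Vc : Matrix (Fin 5) (Fin 5) ℝ)

theorem fullInfo_submatrix_castLE_castLE :
    (fullInfo α0 φ1 φ2 Vc).submatrix (Fin.castLE (by norm_num : 2 ≤ 7))
      (Fin.castLE (by norm_num : 2 ≤ 7)) = tildeVmA α0 φ1 := by
  ext i j
  fin_cases i <;> fin_cases j <;>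
    simp [fullInfo, matF1, matF2, tildeVm, tildeVmA, mul_apply, Fin.sum_univ_succ]

theorem fullInfo_submatrix_castLE_addNat :
    (fullInfo α0 φ1 φ2 Vc).submatrix (Fin.castLE (by norm_num : 2 ≤ 7)) (·.addNat 2) =
      vecMulVec ![0, 1 / (1 - α0 * φ1)] ![φ2 0, φ2 1, 0, 0, 0] := by
  ext i j
  fin_cases i <;> fin_cases j <;>
    simp [fullInfo, matF1, matF2, tildeVm, mul_apply, Fin.sum_univ_succ] <;> ring

theorem fullInfo_submatrix_addNat_addNat :
    (fullInfo α0 φ1 φ2 Vc).submatrix (·.addNat 2) (·.addNat 2) =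
      Vc - (α0 / (1 - α0 * φ1)) • vecMulVec ![φ2 0, φ2 1, 0, 0, 0] ![φ2 0, φ2 1, 0, 0, 0] := by
  ext i j
  fin_cases i <;> fin_cases j <;>
    simp [fullInfo, matF1, matF2, tildeVm, mul_apply, Fin.sum_univ_succ] <;> ring

end Blocks

/-- Schur-complement step for Proposition 1: writing `Ω` in `2+5` block form
`[[A, B], [Bᵀ, D]]`, the block `A` is invertible and the Schur complement
`D − Bᵀ A⁻¹ B` equals `V_c`. -/
theorem full_info_schur_complement
    (α0 φ1 : ℝ) (φ2 : Fin 2 → ℝ) (Vc : Matrix (Fin 5) (Fin 5) ℝ)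
    (hα : α0 ∈ Set.Ioo (0 : ℝ) 1) (hφ : 1 < α0 * φ1) :
    letI Om := fullInfo α0 φ1 φ2 Vc
    letI A : Matrix (Fin 2) (Fin 2) ℝ :=
      Om.submatrix (Fin.castLE (by norm_num : (2 : ℕ) ≤ 7))
        (Fin.castLE (by norm_num : (2 : ℕ) ≤ 7))
    letI B : Matrix (Fin 2) (Fin 5) ℝ :=
      Om.submatrix (Fin.castLE (by norm_num : (2 : ℕ) ≤ 7)) (fun j : Fin 5 => j.addNat 2)
    letI D : Matrix (Fin 5) (Fin 5) ℝ :=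
      Om.submatrix (fun i : Fin 5 => i.addNat 2) (fun j : Fin 5 => j.addNat 2)
    IsUnit A.det ∧ D - Bᵀ * A⁻¹ * B = Vc := by
  have h₁ : 1 - α0 ≠ 0 := sub_ne_zero.2 hα.2.ne'
  have h₂ : 1 - α0 * φ1 ≠ 0 := sub_ne_zero.2 hφ.ne
  simp only [fullInfo_submatrix_castLE_castLE, fullInfo_submatrix_castLE_addNat,
    fullInfo_submatrix_addNat_addNat, transpose_vecMulVec_mul_mul_vecMulVec]
  refine ⟨isUnit_det_tildeVmA h₁ h₂, ?_⟩
  have hquad : ![0, 1 / (1 - α0 * φ1)] ⬝ᵥ (tildeVmA α0 φ1)⁻¹ *ᵥ ![0, 1 / (1 - α0 * φ1)] =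
      -(α0 / (1 - α0 * φ1)) := by
    simp only [dotProduct, mulVec, Fin.sum_univ_two, cons_val_zero, cons_val_one,
      cons_val_fin_one, mul_zero, zero_mul, zero_add, tildeVmA_inv_one_one h₁ h₂]
    field_simp
  rw [hquad, neg_smul, sub_neg_eq_add, sub_add_cancel]
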